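/- The formula W_□ := □(((x → y) → y) ∧ (y → x)) → ((□x → □y) → □y) is valid in every witnessed crisp Gödel-Kripke model: at any world u of such a model, its evaluation equals 1. -/
import Mathlib


/-- Gödel implication on the real unit interval (as reals). -/
noncomputable def gimp (x y : ℝ) : ℝ := if x ≤ y then 1 else y

/-- Gödel negation. -/
noncomputable def gneg (x : ℝ) : ℝ := gimp x 0
/-- Bi-modal formulas. -/
inductive MFm : Type where
  | var : ℕ → MFm
  | bot : MFm
  | and : MFm → MFm → MFm
  | or : MFm → MFm → MFm
  | imp : MFm → MFm → MFm
  | box : MFm → MFm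
  | dia : MFm → MFm

/-- Evaluation in a crisp Gödel-Kripke model: `□` is the infimum over
successors (`1` if there are none), `◇` the supremum (`0` if none). -/
noncomputable def ceval {W : Type} (R : W → W → Prop) (v : W → ℕ → ℝ) :
    MFm → W → ℝ
  | .var n, u => v u n
  | .bot, _ => 0
  | .and φ ψ, u => min (ceval R v φ u) (ceval R v ψ u)
  | .or φ ψ, u => max (ceval R v φ u) (ceval R v ψ u)
  | .imp φ ψ, u => gimp (ceval R v φ u) (ceval R v ψ u)
  | .box φ, u => sInf ({x | ∃ w, R u w ∧ x = ceval R v φ w} ∪ {1})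
  | .dia φ, u => sSup ({x | ∃ w, R u w ∧ x = ceval R v φ w} ∪ {0})

/-- A crisp model is witnessed if every `□`-infimum and `◇`-supremum is
attained at a successor (or equals the trivial value `1`, resp. `0`,
corresponding to a witness with `R`-value `0` in the valued reading). -/
def CWitnessed {W : Type} (R : W → W → Prop) (v : W → ℕ → ℝ) : Prop :=
  ∀ (φ : MFm) (u : W),
    (ceval R v (.box φ) u = 1 ∨
      ∃ w, R u w ∧ ceval R v φ w = ceval R v (.box φ) u) ∧
    (ceval R v (.dia φ) u = 0 ∨
      ∃ w, R u w ∧ ceval R v φ w = ceval R v (.dia φ) u)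

lemma ceval_mem {W : Type} (R : W → W → Prop) (v : W → ℕ → ℝ)
    (hv : ∀ w n, v w n ∈ Set.Icc (0:ℝ) 1) :
    ∀ (φ : MFm) (u : W), ceval R v φ u ∈ Set.Icc (0:ℝ) 1 := by
  intro φ
  induction φ with
  | var n => intro u; exact hv u n
  | bot => intro u; simp [ceval]
  | and φ ψ ih1 ih2 =>
      intro u
      have h1 := ih1 u; have h2 := ih2 u
      simp only [ceval, Set.mem_Icc] at *
      exact ⟨le_min h1.1 h2.1, min_le_of_left_le h1.2⟩
  | or φ ψ ih1 ih2 =>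
      intro u
      have h1 := ih1 u; have h2 := ih2 u
      simp only [ceval, Set.mem_Icc] at *
      exact ⟨le_max_of_le_left h1.1, max_le h1.2 h2.2⟩
  | imp φ ψ ih1 ih2 =>
      intro u
      have h2 := ih2 u
      simp only [ceval, gimp, Set.mem_Icc] at *
      split <;> simp [h2]
  | box φ ih =>
      intro u
      simp only [ceval, Set.mem_Icc]
      constructor
      · apply le_csInf ⟨1, Set.mem_union_right _ (Set.mem_singleton _)⟩
        rintro x (⟨w, _, rfl⟩ | h)
        · exact (ih w).1
        · simp at h; simp [h]
      · exact csInf_le ⟨0, by rintro x (⟨w, _, rfl⟩ | h); exacts [(ih w).1, by simp at h; simp [h]]⟩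
          (Set.mem_union_right _ (Set.mem_singleton _))
  | dia φ ih =>
      intro u
      simp only [ceval, Set.mem_Icc]
      constructor
      · exact le_csSup ⟨1, by rintro x (⟨w, _, rfl⟩ | h); exacts [(ih w).2, by simp at h; simp [h]]⟩
          (Set.mem_union_right _ (Set.mem_singleton _))
      · apply csSup_le ⟨0, Set.mem_union_right _ (Set.mem_singleton _)⟩
        rintro x (⟨w, _, rfl⟩ | h)
        · exact (ih w).2
        · simp at h; simp [h]


lemma gimp_of_le {x y : ℝ} (h : x ≤ y) : gimp x y = 1 := by
  unfold gimp; rw [if_pos h]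

lemma gimp_of_not_le {x y : ℝ} (h : ¬ x ≤ y) : gimp x y = y := by
  unfold gimp; rw [if_neg h]

/-- `W_□ := □(((x→y)→y) ∧ (y→x)) → ((□x→□y)→□y)` is valid (value `1`
at every world) in every witnessed crisp Gödel-Kripke model. -/
theorem wbox_valid_in_witnessed_crisp_models
    {W : Type} (R : W → W → Prop) (v : W → ℕ → ℝ)
    (hv : ∀ w n, v w n ∈ Set.Icc (0:ℝ) 1)
    (hwit : CWitnessed R v) (u : W) :
    let x : MFm := .var 0
    let y : MFm := .var 1
    ceval R v
      (.imp (.box (.and (.imp (.imp x y) y) (.imp y x)))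
            (.imp (.imp (.box x) (.box y)) (.box y))) u = 1 := by
  intro x y
  have bdd : ∀ (φ : MFm) (w : W),
      BddBelow ({t | ∃ w', R w w' ∧ t = ceval R v φ w'} ∪ {1}) := by
    intro φ w
    refine ⟨0, ?_⟩
    rintro t (⟨w', _, rfl⟩ | h)
    · exact (ceval_mem R v hv φ w').1
    · simp at h; simp [h]
  set a := ceval R v (.box x) u with ha
  set b := ceval R v (.box y) u with hb
  set A := ceval R v (.box (.and (.imp (.imp x y) y) (.imp y x))) u with hA
  set B := gimp (gimp a b) b with hB
  show gimp A B = 1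
  suffices h : A ≤ B by
    unfold gimp; rw [if_pos h]
  rw [hB]
  by_cases hab : a ≤ b
  · rw [gimp_of_le hab]
    by_cases hb1 : (1:ℝ) ≤ b
    · rw [gimp_of_le hb1]
      exact (ceval_mem R v hv _ u).2
    · rw [gimp_of_not_le hb1]
      rcases (hwit x u).1 with ha1 | ⟨w0, hw0, hx0⟩
      · exact absurd (ha1 ▸ hab) hb1
      · -- v w0 0 = a
        have hx0' : v w0 0 = a := hx0
        have hbyw : b ≤ v w0 1 := by
          rw [hb]
          show sInf ({t | ∃ w', R u w' ∧ t = ceval R v y w'} ∪ {1}) ≤ v w0 1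
          exact csInf_le (bdd y u) (Set.mem_union_left _ ⟨w0, hw0, rfl⟩)
        have hAc : A ≤ ceval R v (.and (.imp (.imp x y) y) (.imp y x)) w0 := by
          rw [hA]
          show sInf ({t | ∃ w', R u w' ∧
            t = ceval R v (.and (.imp (.imp x y) y) (.imp y x)) w'} ∪ {1}) ≤ _
          exact csInf_le (bdd _ u) (Set.mem_union_left _ ⟨w0, hw0, rfl⟩)
        refine hAc.trans ?_
        show min (gimp (gimp (v w0 0) (v w0 1)) (v w0 1)) (gimp (v w0 1) (v w0 0)) ≤ b
        rw [hx0']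
        by_cases hya : v w0 1 ≤ a
        · have hy_eq : v w0 1 = b := le_antisymm (hya.trans hab) hbyw
          have ha_eq : a = b := le_antisymm hab (hy_eq ▸ hya)
          rw [hy_eq, ha_eq]
          rw [gimp_of_le le_rfl,
              gimp_of_not_le hb1]
          exact min_le_left b 1
        · refine (min_le_right _ _).trans ?_
          rw [gimp_of_not_le hya]
          exact hab
  · rw [gimp_of_not_le hab, gimp_of_le le_rfl]
    exact (ceval_mem R v hv _ u).2
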